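/- arXiv:0811.1572 — 6 statements merged into one kernel-verified Lean document; each statement's English description precedes it below -/
import Mathlib

section
/- Gauge invariance of the quantum-corrected potential Φ: let ℋ, α : I → ℝ with α differentiable and nowhere zero, let φ, s : I → ℝ with s/α² differentiable (s stands for B − Ė), and let ξ₀ : I → ℝ be differentiable. Define φ̃ := φ + ξ̇₀ + ℋξ₀ and s̃ := s − α²ξ₀, while ℋ and α are unchanged. Then φ̃ + d/dη(s̃/α²) + ℋ s̃/α² = φ + d/dη(s/α²) + ℋ s/α² at every point of I. -/
/-- Gauge invariance of the quantum-corrected potential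
Φ = φ + ((B − Ė)/α²)˙ + ℋ(B − Ė)/α² under the quantum-corrected gauge
transformation φ ↦ φ + ξ̇₀ + ℋξ₀, (B − Ė) ↦ (B − Ė) − α²ξ₀
(s stands for B − Ė). -/
theorem quantum_Phi_gauge_invariant
    (I : Set ℝ) (hI : IsOpen I)
    (H α φ s ξ₀ : ℝ → ℝ)
    (hα : ∀ η ∈ I, DifferentiableAt ℝ α η)
    (hα0 : ∀ η ∈ I, α η ≠ 0)
    (hs : ∀ η ∈ I, DifferentiableAt ℝ (fun t => s t / (α t) ^ 2) η)
    (hξ₀ : ∀ η ∈ I, DifferentiableAt ℝ ξ₀ η) :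
    ∀ η ∈ I,
      (φ η + deriv ξ₀ η + H η * ξ₀ η)
        + deriv (fun t => (s t - (α t) ^ 2 * ξ₀ t) / (α t) ^ 2) η
        + H η * ((s η - (α η) ^ 2 * ξ₀ η) / (α η) ^ 2)
      = φ η + deriv (fun t => s t / (α t) ^ 2) η
        + H η * (s η / (α η) ^ 2) := by
  intro η hη
  have heq : (fun t => (s t - (α t) ^ 2 * ξ₀ t) / (α t) ^ 2)
      =ᶠ[nhds η] (fun t => s t / (α t) ^ 2 - ξ₀ t) := by
    filter_upwards [hI.mem_nhds hη] with t ht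
    have h0 : (α t) ^ 2 ≠ 0 := pow_ne_zero 2 (hα0 t ht)
    rw [sub_div, mul_div_cancel_left₀ _ h0]
  have hderiv : deriv (fun t => (s t - (α t) ^ 2 * ξ₀ t) / (α t) ^ 2) η
      = deriv (fun t => s t / (α t) ^ 2) η - deriv ξ₀ η := by
    rw [heq.deriv_eq, deriv_fun_sub (hs η hη) (hξ₀ η hη)]
  have h0 : (α η) ^ 2 ≠ 0 := pow_ne_zero 2 (hα0 η hη)
  rw [hderiv]
  rw [sub_div, mul_div_cancel_left₀ _ h0]
  ring
end

section
/- Gauge invariance of the quantum-corrected comoving curvature perturbation: let ℋ, f, f₁, φ̄̇ : I → ℝ be background functions with φ̄̇ ≠ 0 and 1 + f₁ ≠ 0 everywhere, let ψ, δφ : I → ℝ and ξ₀ : I → ℝ. Define ψ̃ := ψ − ℋ(1+f)ξ₀ and δφ̃ := δφ + φ̄̇(1+f₁)ξ₀, while ℋ, f, f₁, φ̄̇ are unchanged. Then ψ̃ + (ℋ/φ̄̇)·((1+f)/(1+f₁))·δφ̃ = ψ + (ℋ/φ̄̇)·((1+f)/(1+f₁))·δφ at every point of I. -/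
/-- Gauge invariance of the quantum-corrected comoving curvature perturbation
ℛ = ψ + (ℋ/φ̄̇)((1+f)/(1+f₁))δφ under the quantum-corrected gauge
transformation ψ ↦ ψ − ℋ(1+f)ξ₀, δφ ↦ δφ + φ̄̇(1+f₁)ξ₀. -/
theorem quantum_curvature_gauge_invariant
    (I : Set ℝ)
    (H f f₁ phidot ψ δφ ξ₀ : ℝ → ℝ)
    (hphidot : ∀ η ∈ I, phidot η ≠ 0)
    (hf₁ : ∀ η ∈ I, 1 + f₁ η ≠ 0) :
    ∀ η ∈ I,
      (ψ η - H η * (1 + f η) * ξ₀ η)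
        + (H η / phidot η) * ((1 + f η) / (1 + f₁ η)) *
            (δφ η + phidot η * (1 + f₁ η) * ξ₀ η)
      = ψ η + (H η / phidot η) * ((1 + f η) / (1 + f₁ η)) * δφ η := by
  intro η hη
  field_simp [hphidot η hη, hf₁ η hη]
  ring
end

section
/- Gauge invariance of the quantum-corrected second curvature perturbation ℛ₂: let ℋ, f₁, φ̄̇ : I → ℝ be background functions with φ̄̇(1+f₁) nowhere zero and δφ/(φ̄̇(1+f₁)) differentiable, let φ, δφ : I → ℝ and let ξ₀ : I → ℝ be differentiable. Define φ̃ := φ + ξ̇₀ + ℋξ₀ and δφ̃ := δφ + φ̄̇(1+f₁)ξ₀, while ℋ, f₁, φ̄̇ are unchanged. Then φ̃ − ℋ δφ̃/(φ̄̇(1+f₁)) − d/dη[δφ̃/(φ̄̇(1+f₁))] = φ − ℋ δφ/(φ̄̇(1+f₁)) − d/dη[δφ/(φ̄̇(1+f₁))] at every point of I. -/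
/-- Gauge invariance of the quantum-corrected second curvature perturbation
ℛ₂ = φ − ℋ δφ/(φ̄̇(1+f₁)) − (δφ/(φ̄̇(1+f₁)))˙ under the quantum-corrected
gauge transformation φ ↦ φ + ξ̇₀ + ℋξ₀, δφ ↦ δφ + φ̄̇(1+f₁)ξ₀. -/
theorem quantum_R2_gauge_invariant
    (I : Set ℝ) (hI : IsOpen I)
    (H f₁ phidot φ δφ ξ₀ : ℝ → ℝ)
    (hden : ∀ η ∈ I, phidot η * (1 + f₁ η) ≠ 0)
    (hq : ∀ η ∈ I,
      DifferentiableAt ℝ (fun t => δφ t / (phidot t * (1 + f₁ t))) η)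
    (hξ₀ : ∀ η ∈ I, DifferentiableAt ℝ ξ₀ η) :
    ∀ η ∈ I,
      (φ η + deriv ξ₀ η + H η * ξ₀ η)
        - H η * ((δφ η + phidot η * (1 + f₁ η) * ξ₀ η)
            / (phidot η * (1 + f₁ η)))
        - deriv (fun t => (δφ t + phidot t * (1 + f₁ t) * ξ₀ t)
            / (phidot t * (1 + f₁ t))) η
      = φ η - H η * (δφ η / (phidot η * (1 + f₁ η)))
        - deriv (fun t => δφ t / (phidot t * (1 + f₁ t))) η := by
  intro η hη
  have hEq : ∀ t ∈ I,
      (δφ t + phidot t * (1 + f₁ t) * ξ₀ t) / (phidot t * (1 + f₁ t))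
        = δφ t / (phidot t * (1 + f₁ t)) + ξ₀ t := by
    intro t ht
    rw [add_div, mul_div_cancel_left₀ _ (hden t ht)]
  have hEv : (fun t => (δφ t + phidot t * (1 + f₁ t) * ξ₀ t)
      / (phidot t * (1 + f₁ t)))
      =ᶠ[nhds η] (fun t => δφ t / (phidot t * (1 + f₁ t)) + ξ₀ t) := by
    filter_upwards [hI.mem_nhds hη] with t ht using hEq t ht
  have hderiv : deriv (fun t => (δφ t + phidot t * (1 + f₁ t) * ξ₀ t)
      / (phidot t * (1 + f₁ t))) η
      = deriv (fun t => δφ t / (phidot t * (1 + f₁ t))) η + deriv ξ₀ η := by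
    rw [hEv.deriv_eq, deriv_fun_add (hq η hη) (hξ₀ η hη)]
  rw [hderiv, hEq η hη]
  ring
end

section
/- Quantum-corrected background Klein–Gordon equation from Hamilton's equations: let p, φ, π : I → ℝ be differentiable with p > 0, set ℋ := ṗ/(2p), let ν : (0,∞) → ℝ be differentiable with ν > 0, and let V : ℝ → ℝ be differentiable. Assume the quantum-corrected background Hamilton equations in conformal time (lapse N̄ = √p): φ̇ = ν(p)π/p and π̇ = −p² V′(φ) on I. Then φ is twice differentiable and satisfies φ̈ + 2ℋφ̇(1 − ν′(p)p/ν(p)) + ν(p) p V′(φ) = 0 on I. -/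
/-- Quantum-corrected background Klein–Gordon equation from the corrected
Hamilton's equations φ̇ = ν(p)π/p and π̇ = −p²V′(φ) (conformal time,
lapse N̄ = √p), with ℋ = ṗ/(2p): then
φ̈ + 2ℋφ̇(1 − ν′(p)p/ν(p)) + ν(p)pV′(φ) = 0. -/
theorem quantum_background_KG
    (I : Set ℝ) (hI : IsOpen I)
    (p φ pf : ℝ → ℝ) (V : ℝ → ℝ) (ν : ℝ → ℝ)
    (hp : ∀ η ∈ I, DifferentiableAt ℝ p η)
    (hφ : ∀ η ∈ I, DifferentiableAt ℝ φ η)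
    (hpf : ∀ η ∈ I, DifferentiableAt ℝ pf η)
    (hppos : ∀ η ∈ I, 0 < p η)
    (hν : ∀ x > (0 : ℝ), DifferentiableAt ℝ ν x)
    (hνpos : ∀ x > (0 : ℝ), 0 < ν x)
    (hV : Differentiable ℝ V)
    (ham1 : ∀ η ∈ I, deriv φ η = ν (p η) * pf η / p η)
    (ham2 : ∀ η ∈ I, deriv pf η = -(p η) ^ 2 * deriv V (φ η)) :
    ∀ η ∈ I, DifferentiableAt ℝ (deriv φ) η ∧
      deriv (deriv φ) η
        + 2 * (deriv p η / (2 * p η)) * deriv φ η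
            * (1 - deriv ν (p η) * p η / ν (p η))
        + ν (p η) * p η * deriv V (φ η) = 0 := by
  intro η hη
  have hpη := hp η hη
  have hpfη := hpf η hη
  have hpos := hppos η hη
  have hpne : p η ≠ 0 := ne_of_gt hpos
  have hνd : DifferentiableAt ℝ ν (p η) := hν _ hpos
  have hνne : ν (p η) ≠ 0 := ne_of_gt (hνpos _ hpos)
  have hνp : DifferentiableAt ℝ (fun t => ν (p t)) η := hνd.comp η hpη
  have hgd : DifferentiableAt ℝ (fun t => ν (p t) * pf t / p t) η :=
    DifferentiableAt.div (hνp.mul hpfη) hpη hpne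
  have heq : (deriv φ) =ᶠ[nhds η] (fun t => ν (p t) * pf t / p t) :=
    Filter.eventuallyEq_of_mem (hI.mem_nhds hη) ham1
  have hdd : DifferentiableAt ℝ (deriv φ) η := hgd.congr_of_eventuallyEq heq
  refine ⟨hdd, ?_⟩
  have hderiv2 : deriv (deriv φ) η = deriv (fun t => ν (p t) * pf t / p t) η :=
    heq.deriv_eq
  have hcomp : deriv (fun t => ν (p t)) η = deriv ν (p η) * deriv p η := by
    rw [show (fun t => ν (p t)) = ν ∘ p from rfl, deriv_comp η hνd hpη]
  have hmul : deriv (fun t => ν (p t) * pf t) η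
      = deriv ν (p η) * deriv p η * pf η + ν (p η) * deriv pf η := by
    rw [deriv_fun_mul hνp hpfη, hcomp]
  have hg : deriv (fun t => ν (p t) * pf t / p t) η
      = ((deriv ν (p η) * deriv p η * pf η + ν (p η) * deriv pf η) * p η
          - ν (p η) * pf η * deriv p η) / (p η) ^ 2 := by
    rw [deriv_fun_div (c := fun t => ν (p t) * pf t) (hνp.mul hpfη) hpη hpne, hmul]
  rw [hderiv2, hg, ham1 η hη, ham2 η hη]
  field_simp
  ring
end

section
/- Quantum-corrected Raychaudhuri equation from the corrected Friedmann and Klein–Gordon equations: let G > 0, let p : I → ℝ be twice differentiable with p > 0, φ : I → ℝ twice differentiable, V : ℝ → ℝ differentiable, let α, ν : (0,∞) → ℝ be differentiable with α > 0 and ν > 0, and set ℋ := ṗ/(2p) with ℋ ≠ 0 on I. Assume the corrected Friedmann equation ℋ² = (8πG/3) α(p) (φ̇²/(2ν(p)) + p V(φ)) and the corrected Klein–Gordon equation φ̈ + 2ℋφ̇(1 − ν′(p)p/ν(p)) + ν(p) p V′(φ) = 0 on I. Then ℋ̇ = ℋ²(1 + α′(p)p/α(p)) − 4πG (α(p)/ν(p))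 φ̇² (1 − ν′(p)p/(3ν(p))) on I. -/
/-- Quantum-corrected Raychaudhuri equation from the corrected Friedmann and
Klein–Gordon equations: with ℋ = ṗ/(2p) ≠ 0,
ℋ² = (8πG/3)α(p)(φ̇²/(2ν(p)) + pV(φ)) and
φ̈ + 2ℋφ̇(1 − ν′(p)p/ν(p)) + ν(p)pV′(φ) = 0 imply
ℋ̇ = ℋ²(1 + α′(p)p/α(p)) − 4πG(α(p)/ν(p))φ̇²(1 − ν′(p)p/(3ν(p))). -/
theorem quantum_Raychaudhuri
    (I : Set ℝ) (hI : IsOpen I) (G : ℝ) (hG : 0 < G)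
    (p φ : ℝ → ℝ) (V : ℝ → ℝ) (α ν : ℝ → ℝ)
    (hp : ∀ η ∈ I, DifferentiableAt ℝ p η)
    (hp' : ∀ η ∈ I, DifferentiableAt ℝ (deriv p) η)
    (hppos : ∀ η ∈ I, 0 < p η)
    (hφ : ∀ η ∈ I, DifferentiableAt ℝ φ η)
    (hφ' : ∀ η ∈ I, DifferentiableAt ℝ (deriv φ) η)
    (hV : Differentiable ℝ V)
    (hα : ∀ x > (0 : ℝ), DifferentiableAt ℝ α x)
    (hαpos : ∀ x > (0 : ℝ), 0 < α x)
    (hν : ∀ x > (0 : ℝ), DifferentiableAt ℝ ν x)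
    (hνpos : ∀ x > (0 : ℝ), 0 < ν x)
    (hH0 : ∀ η ∈ I, deriv p η / (2 * p η) ≠ 0)
    (friedmann : ∀ η ∈ I, (deriv p η / (2 * p η)) ^ 2
        = (8 * Real.pi * G / 3) * α (p η)
          * ((deriv φ η) ^ 2 / (2 * ν (p η)) + p η * V (φ η)))
    (kg : ∀ η ∈ I, deriv (deriv φ) η
        + 2 * (deriv p η / (2 * p η)) * deriv φ η
            * (1 - deriv ν (p η) * p η / ν (p η))
        + ν (p η) * p η * deriv V (φ η) = 0) :
    ∀ η ∈ I, deriv (fun t => deriv p t / (2 * p t)) η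
      = (deriv p η / (2 * p η)) ^ 2 * (1 + deriv α (p η) * p η / α (p η))
        - 4 * Real.pi * G * (α (p η) / ν (p η)) * (deriv φ η) ^ 2
            * (1 - deriv ν (p η) * p η / (3 * ν (p η))) := by
  intro η hη
  have hpη := hp η hη
  have hp'η := hp' η hη
  have hφη := hφ η hη
  have hφ'η := hφ' η hη
  have hPpos := hppos η hη
  have hApos := hαpos _ hPpos
  have hNpos := hνpos _ hPpos
  have hαd := hα _ hPpos
  have hνd := hν _ hPpos
  have hPd0 : deriv p η ≠ 0 := by
    intro h
    exact hH0 η hη (by rw [h]; simp)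
  have hP0 : p η ≠ 0 := ne_of_gt hPpos
  have h2P0 : (2 : ℝ) * p η ≠ 0 := by positivity
  have hN0 : ν (p η) ≠ 0 := ne_of_gt hNpos
  have h2N0 : (2 : ℝ) * ν (p η) ≠ 0 := by positivity
  have hA0 : α (p η) ≠ 0 := ne_of_gt hApos
  have hπ : (0:ℝ) < Real.pi := Real.pi_pos
  -- derivative of H
  have hf : HasDerivAt (fun t => deriv p t / (2 * p t))
      ((deriv (deriv p) η * (2 * p η) - deriv p η * (2 * deriv p η)) / (2 * p η) ^ 2) η :=
    hp'η.hasDerivAt.div (hpη.hasDerivAt.const_mul 2) h2P0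
  -- derivative of LHS of friedmann
  have hL : HasDerivAt (fun t => (deriv p t / (2 * p t)) ^ 2)
      (2 * (deriv p η / (2 * p η)) ^ 1 *
        ((deriv (deriv p) η * (2 * p η) - deriv p η * (2 * deriv p η)) / (2 * p η) ^ 2)) η :=
    hf.pow 2
  -- pieces of RHS
  have hg1 : HasDerivAt (fun t => α (p t)) (deriv α (p η) * deriv p η) η :=
    (hαd.hasDerivAt).comp η hpη.hasDerivAt
  have hg2 : HasDerivAt (fun t => (deriv φ t) ^ 2)
      (2 * (deriv φ η) ^ 1 * deriv (deriv φ) η) η := hφ'η.hasDerivAt.pow 2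
  have hg3 : HasDerivAt (fun t => 2 * ν (p t)) (2 * (deriv ν (p η) * deriv p η)) η :=
    ((hνd.hasDerivAt).comp η hpη.hasDerivAt).const_mul 2
  have hg4 : HasDerivAt (fun t => (deriv φ t) ^ 2 / (2 * ν (p t)))
      ((2 * (deriv φ η) ^ 1 * deriv (deriv φ) η * (2 * ν (p η))
        - (deriv φ η) ^ 2 * (2 * (deriv ν (p η) * deriv p η))) / (2 * ν (p η)) ^ 2) η :=
    hg2.div hg3 h2N0
  have hg5 : HasDerivAt (fun t => p t * V (φ t))
      (deriv p η * V (φ η) + p η * (deriv V (φ η) * deriv φ η)) η :=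
    hpη.hasDerivAt.mul (((hV (φ η)).hasDerivAt).comp η hφη.hasDerivAt)
  have hR : HasDerivAt (fun t => (8 * Real.pi * G / 3) * α (p t)
        * ((deriv φ t) ^ 2 / (2 * ν (p t)) + p t * V (φ t)))
      ((8 * Real.pi * G / 3) * (deriv α (p η) * deriv p η)
          * ((deriv φ η) ^ 2 / (2 * ν (p η)) + p η * V (φ η))
        + (8 * Real.pi * G / 3) * α (p η)
          * ((2 * (deriv φ η) ^ 1 * deriv (deriv φ) η * (2 * ν (p η))
              - (deriv φ η) ^ 2 * (2 * (deriv ν (p η) * deriv p η))) / (2 * ν (p η)) ^ 2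
            + (deriv p η * V (φ η) + p η * (deriv V (φ η) * deriv φ η)))) η := by
    exact (hg1.const_mul (8 * Real.pi * G / 3)).mul (hg4.add hg5)
  have hev : (fun t => (deriv p t / (2 * p t)) ^ 2) =ᶠ[nhds η]
      (fun t => (8 * Real.pi * G / 3) * α (p t)
        * ((deriv φ t) ^ 2 / (2 * ν (p t)) + p t * V (φ t))) :=
    Filter.eventuallyEq_of_mem (hI.mem_nhds hη) friedmann
  have eqd := hev.deriv_eq
  rw [hL.deriv, hR.deriv] at eqd
  rw [hf.deriv]
  have fr := friedmann η hη
  have kge := kg η hη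
  field_simp at eqd fr kge ⊢
  have hPdN : deriv p η * ν (p η) ≠ 0 := mul_ne_zero hPd0 hN0
  have key : deriv p η * ν (p η) * (2 * (p η * deriv (deriv p) η - deriv p η ^ 2) * 3 * ν (p η) ^ 2 * α (p η)) =
    deriv p η * ν (p η) *
      (deriv p η ^ 2 * 3 * ν (p η) ^ 2 * (α (p η) + p η * deriv α (p η)) -
        2 ^ 2 * p η ^ 2 * Real.pi * G * deriv φ η ^ 2 * α (p η) ^ 2 * 4 * (3 * ν (p η) - p η * deriv ν (p η))) := by
    linear_combination (2 * ν (p η) * α (p η)) * eqd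
      + (32 * Real.pi * G * p η ^ 2 * α (p η) ^ 2 * ν (p η) * deriv φ η) * kge
      - (deriv p η * ν (p η) ^ 2 * (α (p η) + p η * deriv α (p η))) * fr
  exact mul_left_cancel₀ hPdN key
end

section
/- Quantum-corrected stiff-fluid background equation: let G > 0, let p : I → ℝ be twice differentiable with p > 0, φ : I → ℝ twice differentiable, let α, ν : (0,∞) → ℝ be differentiable with α > 0 and ν > 0, and set ℋ := ṗ/(2p) with ℋ ≠ 0 on I. Assume the corrected free-field (V = 0) Friedmann equation ℋ² = (8πG/3) α(p) φ̇²/(2ν(p)) and the corrected free Klein–Gordon equation φ̈ + 2ℋφ̇(1 − ν′(p)p/ν(p)) = 0 on I. Then ℋ̇ = −2ℋ² (1 − (α(p)ν(p))′ p/(2α(p)ν(p))), where (αν)′/(αν) = α′/α + ν′/ν, on I. -/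
/-- Quantum-corrected stiff-fluid background equation: with ℋ = ṗ/(2p) ≠ 0,
the corrected free-field (V = 0) Friedmann equation
ℋ² = (8πG/3)α(p)φ̇²/(2ν(p)) and the corrected free Klein–Gordon equation
φ̈ + 2ℋφ̇(1 − ν′(p)p/ν(p)) = 0 imply
ℋ̇ = −2ℋ²(1 − (α′(p)/α(p) + ν′(p)/ν(p))p/2). -/
theorem quantum_stiff_fluid_equation
    (I : Set ℝ) (hI : IsOpen I) (G : ℝ) (hG : 0 < G)
    (p φ : ℝ → ℝ) (α ν : ℝ → ℝ)
    (hp : ∀ η ∈ I, DifferentiableAt ℝ p η)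
    (hp' : ∀ η ∈ I, DifferentiableAt ℝ (deriv p) η)
    (hppos : ∀ η ∈ I, 0 < p η)
    (hφ : ∀ η ∈ I, DifferentiableAt ℝ φ η)
    (hφ' : ∀ η ∈ I, DifferentiableAt ℝ (deriv φ) η)
    (hα : ∀ x > (0 : ℝ), DifferentiableAt ℝ α x)
    (hαpos : ∀ x > (0 : ℝ), 0 < α x)
    (hν : ∀ x > (0 : ℝ), DifferentiableAt ℝ ν x)
    (hνpos : ∀ x > (0 : ℝ), 0 < ν x)
    (hH0 : ∀ η ∈ I, deriv p η / (2 * p η) ≠ 0)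
    (friedmann : ∀ η ∈ I, (deriv p η / (2 * p η)) ^ 2
        = (8 * Real.pi * G / 3) * α (p η) * (deriv φ η) ^ 2 / (2 * ν (p η)))
    (kg : ∀ η ∈ I, deriv (deriv φ) η
        + 2 * (deriv p η / (2 * p η)) * deriv φ η
            * (1 - deriv ν (p η) * p η / ν (p η)) = 0) :
    ∀ η ∈ I, deriv (fun t => deriv p t / (2 * p t)) η
      = -2 * (deriv p η / (2 * p η)) ^ 2
          * (1 - (deriv α (p η) / α (p η) + deriv ν (p η) / ν (p η))
              * p η / 2) := by
  intro η hη
  have hmem : I ∈ nhds η := hI.mem_nhds hη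
  have hPpos := hppos η hη
  have hApos := hαpos _ hPpos
  have hNpos := hνpos _ hPpos
  have hPne : p η ≠ 0 := ne_of_gt hPpos
  have hAne : α (p η) ≠ 0 := ne_of_gt hApos
  have hNne : ν (p η) ≠ 0 := ne_of_gt hNpos
  have hP2 : (2 : ℝ) * p η ≠ 0 := by positivity
  have hN2 : (2 : ℝ) * ν (p η) ≠ 0 := by positivity
  have hP1ne : deriv p η ≠ 0 := by
    intro h
    exact hH0 η hη (by rw [h]; simp)
  -- derivative facts
  have hp1 : HasDerivAt p (deriv p η) η := (hp η hη).hasDerivAt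
  have hp2 : HasDerivAt (deriv p) (deriv (deriv p) η) η := (hp' η hη).hasDerivAt
  have hφ1 : HasDerivAt (deriv φ) (deriv (deriv φ) η) η := (hφ' η hη).hasDerivAt
  have hαd : HasDerivAt α (deriv α (p η)) (p η) := (hα _ hPpos).hasDerivAt
  have hνd : HasDerivAt ν (deriv ν (p η)) (p η) := (hν _ hPpos).hasDerivAt
  have hAc : HasDerivAt (fun t => α (p t)) (deriv α (p η) * deriv p η) η :=
    hαd.comp η hp1
  have hNc : HasDerivAt (fun t => ν (p t)) (deriv ν (p η) * deriv p η) η :=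
    hνd.comp η hp1
  have hH : HasDerivAt (fun t => deriv p t / (2 * p t))
      ((deriv (deriv p) η * (2 * p η) - deriv p η * (2 * deriv p η))
        / (2 * p η) ^ 2) η := by
    simpa using hp2.fun_div (hp1.const_mul 2) hP2
  have hHsq : HasDerivAt (fun t => (deriv p t / (2 * p t)) ^ 2)
      (2 * (deriv p η / (2 * p η)) ^ 1
        * ((deriv (deriv p) η * (2 * p η) - deriv p η * (2 * deriv p η))
          / (2 * p η) ^ 2)) η := hH.pow 2
  have hnum : HasDerivAt
      (fun t => 8 * Real.pi * G / 3 * α (p t) * (deriv φ t) ^ 2)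
      (8 * Real.pi * G / 3 * (deriv α (p η) * deriv p η) * (deriv φ η) ^ 2
        + 8 * Real.pi * G / 3 * α (p η)
          * (2 * (deriv φ η) ^ 1 * deriv (deriv φ) η)) η :=
    (hAc.const_mul _).mul (hφ1.pow 2)
  have hRHS : HasDerivAt
      (fun t => 8 * Real.pi * G / 3 * α (p t) * (deriv φ t) ^ 2
        / (2 * ν (p t)))
      (((8 * Real.pi * G / 3 * (deriv α (p η) * deriv p η) * (deriv φ η) ^ 2
        + 8 * Real.pi * G / 3 * α (p η)
          * (2 * (deriv φ η) ^ 1 * deriv (deriv φ) η)) * (2 * ν (p η))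
        - 8 * Real.pi * G / 3 * α (p η) * (deriv φ η) ^ 2
          * (2 * (deriv ν (p η) * deriv p η))) / (2 * ν (p η)) ^ 2) η := by
    simpa using hnum.fun_div (hNc.const_mul 2) hN2
  have heq : 2 * (deriv p η / (2 * p η)) ^ 1
        * ((deriv (deriv p) η * (2 * p η) - deriv p η * (2 * deriv p η))
          / (2 * p η) ^ 2)
      = ((8 * Real.pi * G / 3 * (deriv α (p η) * deriv p η) * (deriv φ η) ^ 2
        + 8 * Real.pi * G / 3 * α (p η)
          * (2 * (deriv φ η) ^ 1 * deriv (deriv φ) η)) * (2 * ν (p η))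
        - 8 * Real.pi * G / 3 * α (p η) * (deriv φ η) ^ 2
          * (2 * (deriv ν (p η) * deriv p η))) / (2 * ν (p η)) ^ 2 := by
    rw [← hHsq.deriv, ← hRHS.deriv]
    apply Filter.EventuallyEq.deriv_eq
    filter_upwards [hmem] with t ht
    exact friedmann t ht
  -- abbreviations
  set C := 8 * Real.pi * G / 3 with hC
  set P := p η
  set P1 := deriv p η
  set P2 := deriv (deriv p) η
  set U := deriv φ η
  set U1 := deriv (deriv φ) η
  set A := α P
  set A1 := deriv α P
  set N := ν P
  set N1 := deriv ν P
  -- polynomial forms of hypotheses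
  have h1e : N * P1 ^ 2 = 2 * C * A * U ^ 2 * P ^ 2 := by
    have hf : (P1 / (2 * P)) ^ 2 = C * A * U ^ 2 / (2 * N) := friedmann η hη
    rw [div_pow, div_eq_div_iff (pow_ne_zero 2 hP2) hN2] at hf
    linear_combination hf / 2
  have h2e : U1 * N * P = -(P1 * U * (N - N1 * P)) := by
    have hk : U1 + 2 * (P1 / (2 * P)) * U * (1 - N1 * P / N) = 0 := kg η hη
    field_simp at hk
    linear_combination hk
  have h3e : N ^ 2 * P1 * (P * P2 - P1 ^ 2)
      = P ^ 3 * (N * C * A1 * P1 * U ^ 2 + 2 * N * C * A * U * U1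
        - C * A * U ^ 2 * N1 * P1) := by
    field_simp at heq
    linarith [heq]
  have key : N * P1 * P * (2 * A * N * P2)
      = N * P1 * P * (P1 ^ 2 * (A1 * N + A * N1)) := by
    linear_combination (2 * A) * h3e + (4 * A ^ 2 * P ^ 2 * C * U) * h2e
      + (2 * A * P1 * (N - N1 * P) + (A * N1 - N * A1) * P1 * P) * h1e
  have key2 : 2 * A * N * P2 = P1 ^ 2 * (A1 * N + A * N1) := by
    have hNPne : N * P1 * P ≠ 0 := by
      simp [hNne, hP1ne, hPne]
    exact mul_left_cancel₀ hNPne key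
  rw [hH.deriv]
  field_simp
  linear_combination P * key2
end
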